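/- Let n ≥ 2, r ∈ {1, …, n}, ρ > 0, φ ∈ ℝ, θ = πr/(n+1), and let x, y ∈ ℂ^n be given by x_k = e^{ikφ} ρ^{k/2} sin(kθ), y_k = e^{ikφ} ρ^{−k/2} sin(kθ). Let S be the subspace of tridiagonal Toeplitz matrices (diagonal offsets D = {−1, 0, 1}) and (yx*)|_S the orthogonal Frobenius projection of yx* onto S. Then ‖(yx*)|_S‖_F = ((n+1)/2) · √( 1/n + (1/(n−1)) (ρ + 1/ρ) cos²θ ). -/

import Mathlib

open Matrix Complex

/-- Membership in the subspace `S` of structured Toeplitz matrices with diagonal offsets in `D`. -/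
def InToeplitzS (n : ℕ) (D : Finset ℤ) (M : Matrix (Fin n) (Fin n) ℂ) : Prop :=
  (∀ i j : Fin n, ((j : ℤ) - (i : ℤ)) ∉ D → M i j = 0) ∧
  (∀ i j k l : Fin n, ((j : ℤ) - (i : ℤ)) = ((l : ℤ) - (k : ℤ)) → M i j = M k l)

/-- The diagonal-averaging map: orthogonal projection onto the structured Toeplitz subspace. -/
noncomputable def projS (n : ℕ) (D : Finset ℤ) (M : Matrix (Fin n) (Fin n) ℂ) :
    Matrix (Fin n) (Fin n) ℂ := fun i j =>
  if ((j : ℤ) - (i : ℤ)) ∈ D then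
    (∑ k : Fin n, ∑ l : Fin n,
      if ((l : ℤ) - (k : ℤ)) = ((j : ℤ) - (i : ℤ)) then M k l else 0) /
      ((n - ((j : ℤ) - (i : ℤ)).natAbs : ℕ) : ℂ)
  else 0

/-- Frobenius norm of a complex matrix. -/
noncomputable def frobNorm {n : ℕ} (M : Matrix (Fin n) (Fin n) ℂ) : ℝ :=
  Real.sqrt (∑ i : Fin n, ∑ j : Fin n, ‖M i j‖ ^ 2)

/-- Frobenius inner product `⟨A, B⟩ = trace (A* B)`. -/
noncomputable def frobInner {n : ℕ} (A B : Matrix (Fin n) (Fin n) ℂ) : ℂ :=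
  (Aᴴ * B).trace

/-- Normalized projection `M|_T = M|_S / ‖M|_S‖_F`. -/
noncomputable def projT (n : ℕ) (D : Finset ℤ) (M : Matrix (Fin n) (Fin n) ℂ) :
    Matrix (Fin n) (Fin n) ℂ :=
  (frobNorm (projS n D M))⁻¹ • projS n D M

/-- Euclidean norm of a complex vector. -/
noncomputable def euclNorm {n : ℕ} (x : Fin n → ℂ) : ℝ :=
  Real.sqrt (∑ k : Fin n, ‖x k‖ ^ 2)

/-- Spectral norm (operator 2-norm) of a complex matrix. -/
noncomputable def specNorm {n : ℕ} (M : Matrix (Fin n) (Fin n) ℂ) : ℝ :=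
  ‖Matrix.toEuclideanCLM (𝕜 := ℂ) M‖

section AuxProofHelpers
open Real Finset

lemma cos_sum_zero (n r : ℕ) (hn : 2 ≤ n) (hr1 : 1 ≤ r) (hrn : r ≤ n)
    (θ : ℝ) (hθ : θ = Real.pi * r / (n + 1)) (c : ℝ) :
    ∑ k ∈ range (n + 1), Real.cos (2 * k * θ + c) = 0 := by
  have hn1 : ((n : ℝ) + 1) ≠ 0 := by positivity
  set z : ℂ := Complex.exp (2 * θ * Complex.I) with hz
  have hzpow : z ^ (n + 1) = 1 := by
    rw [hz, ← Complex.exp_nat_mul]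
    have h1 : ((n : ℂ) + 1) * (2 * θ * Complex.I) = (r : ℂ) * (2 * π * Complex.I) := by
      have hre : ((n : ℝ) + 1) * (2 * θ) = (r : ℝ) * (2 * π) := by
        rw [hθ]; field_simp
      have := congrArg (fun t : ℝ => (t : ℂ) * Complex.I) hre
      push_cast at this ⊢
      linear_combination this
    push_cast
    rw [h1]
    exact_mod_cast Complex.exp_int_mul_two_pi_mul_I (r : ℤ)
  have hθpos : 0 < θ := by
    rw [hθ]; positivity
  have hθlt : θ < π := by
    rw [hθ, div_lt_iff₀ (by positivity)]
    have : (r : ℝ) < (n : ℝ) + 1 := by exact_mod_cast Nat.lt_succ_of_le hrn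
    nlinarith [Real.pi_pos]
  have hzne : z ≠ 1 := by
    intro h
    rw [hz, Complex.exp_eq_one_iff] at h
    obtain ⟨k, hk⟩ := h
    have hI : (Complex.I : ℂ) ≠ 0 := Complex.I_ne_zero
    have h2 : (2 * θ : ℂ) = (k : ℂ) * (2 * π) := by
      have := mul_right_cancel₀ hI (by linear_combination hk : (2 * θ : ℂ) * Complex.I = ((k : ℂ) * (2 * π)) * Complex.I)
      exact this
    have h3 : (2 * θ : ℝ) = (k : ℝ) * (2 * π) := by exact_mod_cast h2
    have hk0 : (0 : ℝ) < k := by nlinarith [Real.pi_pos]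
    have hk1 : (k : ℝ) < 1 := by nlinarith [Real.pi_pos]
    have h4 : (0 : ℤ) < k := by exact_mod_cast hk0
    have h5 : (k : ℤ) < 1 := by exact_mod_cast hk1
    omega
  have hgeom : ∑ k ∈ range (n + 1), z ^ k = 0 := by
    rw [geom_sum_eq hzne, hzpow]; simp
  have key : ∑ k ∈ range (n + 1), Complex.exp (((2 * (k : ℝ) * θ + c : ℝ) : ℂ) * Complex.I) = 0 := by
    have h6 : ∀ k ∈ range (n+1), Complex.exp (((2 * (k : ℝ) * θ + c : ℝ) : ℂ) * Complex.I)
        = z ^ k * Complex.exp ((c : ℂ) * Complex.I) := by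
      intro k _
      rw [hz, ← Complex.exp_nat_mul, ← Complex.exp_add]
      congr 1
      push_cast
      ring
    rw [Finset.sum_congr rfl h6, ← Finset.sum_mul, hgeom, zero_mul]
  calc ∑ k ∈ range (n + 1), Real.cos (2 * k * θ + c)
      = ∑ k ∈ range (n + 1), (Complex.exp (((2 * (k : ℝ) * θ + c : ℝ) : ℂ) * Complex.I)).re := by
        refine Finset.sum_congr rfl fun k _ => ?_
        rw [Complex.exp_ofReal_mul_I_re]
    _ = 0 := by rw [← Complex.re_sum, key, Complex.zero_re]

lemma sinsq_sum (n r : ℕ) (hn : 2 ≤ n) (hr1 : 1 ≤ r) (hrn : r ≤ n)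
    (θ : ℝ) (hθ : θ = Real.pi * r / (n + 1)) :
    ∑ k ∈ range n, Real.sin ((k + 1) * θ) ^ 2 = ((n : ℝ) + 1) / 2 := by
  have h0 := cos_sum_zero n r hn hr1 hrn θ hθ 0
  rw [Finset.sum_range_succ'] at h0
  push_cast at h0
  have h1 : ∑ k ∈ range n, Real.cos (2 * ((k : ℝ) + 1) * θ) = -1 := by
    have e1 : ∀ k ∈ range n, Real.cos (2 * ((k : ℝ) + 1) * θ)
        = Real.cos (2 * ((k : ℝ) + 1) * θ + 0) := by
      intro k _; ring_nf
    rw [Finset.sum_congr rfl e1]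
    have h2 : Real.cos (2 * (0 : ℝ) * θ + 0) = 1 := by norm_num
    linarith [h0]
  have e2 : ∀ k ∈ range n, Real.sin ((k + 1) * θ) ^ 2
      = 1 / 2 - Real.cos (2 * ((k : ℝ) + 1) * θ) / 2 := by
    intro k _
    have hs := Real.sin_sq (((k : ℝ) + 1) * θ)
    have hc := Real.cos_two_mul (((k : ℝ) + 1) * θ)
    have h3 : (2 : ℝ) * (((k : ℝ) + 1) * θ) = 2 * ((k : ℝ) + 1) * θ := by ring
    rw [h3] at hc
    linarith
  rw [Finset.sum_congr rfl e2, Finset.sum_sub_distrib, Finset.sum_const, Finset.card_range,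
    ← Finset.sum_div, h1]
  push_cast
  ring

lemma sinprod_sum (n r : ℕ) (hn : 2 ≤ n) (hr1 : 1 ≤ r) (hrn : r ≤ n)
    (θ : ℝ) (hθ : θ = Real.pi * r / (n + 1)) :
    ∑ k ∈ range (n - 1), Real.sin ((k + 1) * θ) * Real.sin ((k + 2) * θ)
      = ((n : ℝ) + 1) / 2 * Real.cos θ := by
  obtain ⟨m, rfl⟩ : ∃ m, n = m + 2 := ⟨n - 2, by omega⟩
  have h0 := cos_sum_zero (m + 2) r hn hr1 hrn θ hθ θ
  rw [Finset.sum_range_succ', Finset.sum_range_succ] at h0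
  push_cast at h0
  have hlast : Real.cos (2 * (((m : ℝ) + 1) + 1) * θ + θ) = Real.cos θ := by
    have harg : 2 * (((m : ℝ) + 1) + 1) * θ + θ = ((r : ℤ) : ℝ) * (2 * π) - θ := by
      push_cast; rw [hθ]; field_simp; push_cast; ring
    rw [harg, Real.cos_int_mul_two_pi_sub θ (r : ℤ)]
  have hzero : Real.cos (2 * (0 : ℝ) * θ + θ) = Real.cos θ := by norm_num
  have hS : ∑ x ∈ range (m + 1), Real.cos (2 * ((x : ℝ) + 1) * θ + θ) = -2 * Real.cos θ := by
    linarith [h0]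
  have e2 : ∀ k ∈ range (m + 1), Real.sin (((k : ℝ) + 1) * θ) * Real.sin (((k : ℝ) + 2) * θ)
      = (Real.cos θ - Real.cos (2 * ((k : ℝ) + 1) * θ + θ)) / 2 := by
    intro k _
    have h := Real.cos_sub (((k : ℝ) + 2) * θ) (((k : ℝ) + 1) * θ)
    have h' := Real.cos_add (((k : ℝ) + 2) * θ) (((k : ℝ) + 1) * θ)
    rw [show ((k : ℝ) + 2) * θ - ((k : ℝ) + 1) * θ = θ by ring] at h
    rw [show ((k : ℝ) + 2) * θ + ((k : ℝ) + 1) * θ = 2 * ((k : ℝ) + 1) * θ + θ by ring] at h'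
    linarith
  rw [show (m + 2 - 1) = m + 1 from rfl, Finset.sum_congr rfl e2, ← Finset.sum_div,
    Finset.sum_sub_distrib, Finset.sum_const, Finset.card_range, hS]
  push_cast
  ring

-- helper: sum with shifted-membership indicator
lemma sum_shift_ind {β : Type*} [AddCommMonoid β] (n : ℕ) (e : ℕ → β) :
    ∑ k ∈ range n, (if k + 1 ∈ range n then e k else 0) = ∑ k ∈ range (n - 1), e k := by
  rw [← Finset.sum_subset (Finset.range_subset_range.2 (Nat.sub_le n 1))
      (fun x hx hx' => by rw [if_neg]; simp only [Finset.mem_range] at *; omega)]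
  refine Finset.sum_congr rfl fun k hk => ?_
  rw [if_pos]
  simp only [Finset.mem_range] at *
  omega

noncomputable def ent (ρ φ θ : ℝ) (a b : ℕ) : ℂ :=
  (Complex.exp (Complex.I * ((((a : ℝ) + 1) * φ : ℝ) : ℂ)) *
      ((ρ ^ ((-((a : ℝ) + 1)) / 2) : ℝ) : ℂ) *
      ((Real.sin (((a : ℝ) + 1) * θ) : ℝ) : ℂ)) *
  (Complex.exp (-(Complex.I * ((((b : ℝ) + 1) * φ : ℝ) : ℂ))) *
      ((ρ ^ ((((b : ℝ) + 1) : ℝ) / 2) : ℝ) : ℂ) *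
      ((Real.sin (((b : ℝ) + 1) * θ) : ℝ) : ℂ))

lemma ent_diag (ρ φ θ : ℝ) (hρ : 0 < ρ) (a : ℕ) :
    ent ρ φ θ a a = ((Real.sin (((a : ℝ) + 1) * θ) ^ 2 : ℝ) : ℂ) := by
  have h1 : Complex.exp (Complex.I * ((((a : ℝ) + 1) * φ : ℝ) : ℂ)) *
      Complex.exp (-(Complex.I * ((((a : ℝ) + 1) * φ : ℝ) : ℂ))) = 1 := by
    rw [← Complex.exp_add]; simp
  have h2 : (ρ ^ ((-((a : ℝ) + 1)) / 2) : ℝ) * (ρ ^ ((((a : ℝ) + 1) : ℝ) / 2) : ℝ) = 1 := by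
    rw [← Real.rpow_add hρ, show (-((a : ℝ) + 1)) / 2 + (((a : ℝ) + 1) : ℝ) / 2 = 0 by ring,
      Real.rpow_zero]
  calc ent ρ φ θ a a
      = (Complex.exp (Complex.I * ((((a : ℝ) + 1) * φ : ℝ) : ℂ)) *
          Complex.exp (-(Complex.I * ((((a : ℝ) + 1) * φ : ℝ) : ℂ)))) *
        (((ρ ^ ((-((a : ℝ) + 1)) / 2) : ℝ) : ℂ) * ((ρ ^ ((((a : ℝ) + 1) : ℝ) / 2) : ℝ) : ℂ)) *
        (((Real.sin (((a : ℝ) + 1) * θ) : ℝ) : ℂ) * ((Real.sin (((a : ℝ) + 1) * θ) : ℝ) : ℂ)) := by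
        rw [ent]; ring
    _ = _ := by
        rw [h1, ← Complex.ofReal_mul, h2, ← Complex.ofReal_mul]
        push_cast
        ring

lemma ent_super (ρ φ θ : ℝ) (hρ : 0 < ρ) (a : ℕ) :
    ent ρ φ θ a (a + 1) = Complex.exp (-(Complex.I * (φ : ℂ))) * ((ρ ^ ((1 : ℝ) / 2) : ℝ) : ℂ) *
      ((Real.sin (((a : ℝ) + 1) * θ) * Real.sin (((a : ℝ) + 2) * θ) : ℝ) : ℂ) := by
  have h1 : Complex.exp (Complex.I * ((((a : ℝ) + 1) * φ : ℝ) : ℂ)) *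
      Complex.exp (-(Complex.I * (((((a + 1 : ℕ) : ℝ) + 1) * φ : ℝ) : ℂ))) =
      Complex.exp (-(Complex.I * (φ : ℂ))) := by
    rw [← Complex.exp_add]; congr 1; push_cast; ring
  have h2 : (ρ ^ ((-((a : ℝ) + 1)) / 2) : ℝ) * (ρ ^ (((((a + 1 : ℕ) : ℝ) + 1) : ℝ) / 2) : ℝ) =
      ρ ^ ((1 : ℝ) / 2) := by
    rw [← Real.rpow_add hρ]; congr 1; push_cast; ring
  calc ent ρ φ θ a (a + 1)
      = (Complex.exp (Complex.I * ((((a : ℝ) + 1) * φ : ℝ) : ℂ)) *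
         Complex.exp (-(Complex.I * (((((a + 1 : ℕ) : ℝ) + 1) * φ : ℝ) : ℂ)))) *
        (((ρ ^ ((-((a : ℝ) + 1)) / 2) : ℝ) : ℂ) * ((ρ ^ (((((a + 1 : ℕ) : ℝ) + 1) : ℝ) / 2) : ℝ) : ℂ)) *
        (((Real.sin (((a : ℝ) + 1) * θ) : ℝ) : ℂ) * ((Real.sin ((((a + 1 : ℕ) : ℝ) + 1) * θ) : ℝ) : ℂ)) := by
        rw [ent]; ring
    _ = _ := by
        rw [h1, ← Complex.ofReal_mul, h2]
        push_cast
        ring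

lemma ent_sub (ρ φ θ : ℝ) (hρ : 0 < ρ) (b : ℕ) :
    ent ρ φ θ (b + 1) b = Complex.exp (Complex.I * (φ : ℂ)) * ((ρ ^ (-(1 : ℝ) / 2) : ℝ) : ℂ) *
      ((Real.sin (((b : ℝ) + 1) * θ) * Real.sin (((b : ℝ) + 2) * θ) : ℝ) : ℂ) := by
  have h1 : Complex.exp (Complex.I * (((((b + 1 : ℕ) : ℝ) + 1) * φ : ℝ) : ℂ)) *
      Complex.exp (-(Complex.I * ((((b : ℝ) + 1) * φ : ℝ) : ℂ))) =
      Complex.exp (Complex.I * (φ : ℂ)) := by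
    rw [← Complex.exp_add]; congr 1; push_cast; ring
  have h2 : (ρ ^ ((-(((b + 1 : ℕ) : ℝ) + 1)) / 2) : ℝ) * (ρ ^ ((((b : ℝ) + 1) : ℝ) / 2) : ℝ) =
      ρ ^ (-(1 : ℝ) / 2) := by
    rw [← Real.rpow_add hρ]; congr 1; push_cast; ring
  calc ent ρ φ θ (b + 1) b
      = (Complex.exp (Complex.I * (((((b + 1 : ℕ) : ℝ) + 1) * φ : ℝ) : ℂ)) *
         Complex.exp (-(Complex.I * ((((b : ℝ) + 1) * φ : ℝ) : ℂ)))) *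
        (((ρ ^ ((-(((b + 1 : ℕ) : ℝ) + 1)) / 2) : ℝ) : ℂ) * ((ρ ^ ((((b : ℝ) + 1) : ℝ) / 2) : ℝ) : ℂ)) *
        (((Real.sin ((((b + 1 : ℕ) : ℝ) + 1) * θ) : ℝ) : ℂ) * ((Real.sin (((b : ℝ) + 1) * θ) : ℝ) : ℂ)) := by
        rw [ent]; ring
    _ = _ := by
        rw [h1, ← Complex.ofReal_mul, h2]
        push_cast
        ring

lemma double_fin_to_range {β : Type*} [AddCommMonoid β] (n : ℕ) (f : ℕ → ℕ → β) :
    (∑ k : Fin n, ∑ l : Fin n, f k l) = ∑ k ∈ range n, ∑ l ∈ range n, f k l := by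
  rw [Fin.sum_univ_eq_sum_range (fun a => ∑ l : Fin n, f a l) n]
  exact Finset.sum_congr rfl fun k _ => Fin.sum_univ_eq_sum_range (fun b => f k b) n

end AuxProofHelpers

open Finset in

/-- Frobenius norm of the tridiagonal Toeplitz projection of `yx*` for the sine-type
eigenvectors: `‖(yx*)|_S‖_F = ((n+1)/2)·√(1/n + (1/(n−1))(ρ + 1/ρ)cos²θ)`. -/
theorem frobNorm_projS_eigenvectors (n r : ℕ) (hn : 2 ≤ n) (hr1 : 1 ≤ r) (hrn : r ≤ n)
    (ρ : ℝ) (hρ : 0 < ρ) (φ : ℝ) (θ : ℝ) (hθ : θ = Real.pi * r / (n + 1))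
    (x y : Fin n → ℂ)
    (hx : ∀ i : Fin n, x i =
      Complex.exp (Complex.I * ((((i : ℕ) + 1) * φ : ℝ) : ℂ)) *
        ((ρ ^ ((((i : ℕ) + 1) : ℝ) / 2) : ℝ) : ℂ) *
        ((Real.sin (((i : ℕ) + 1) * θ) : ℝ) : ℂ))
    (hy : ∀ i : Fin n, y i =
      Complex.exp (Complex.I * ((((i : ℕ) + 1) * φ : ℝ) : ℂ)) *
        ((ρ ^ ((-(((i : ℕ) + 1) : ℝ)) / 2) : ℝ) : ℂ) *
        ((Real.sin (((i : ℕ) + 1) * θ) : ℝ) : ℂ)) :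
    frobNorm (projS n ({-1, 0, 1} : Finset ℤ) (vecMulVec y (star x))) =
      ((n + 1) / 2) *
        Real.sqrt (1 / n + (1 / (n - 1)) * (ρ + 1 / ρ) * (Real.cos θ) ^ 2) := by
  set M := vecMulVec y (star x) with hM
  set A : ℝ := ((n : ℝ) + 1) / 2 with hA
  -- entries of M
  have hMentry : ∀ k l : Fin n, M k l = ent ρ φ θ (k : ℕ) (l : ℕ) := by
    intro k l
    have hsx : star (x l) = Complex.exp (-(Complex.I * (((((l : ℕ) : ℝ) + 1) * φ : ℝ) : ℂ))) *
        ((ρ ^ (((((l : ℕ) : ℝ) + 1) : ℝ) / 2) : ℝ) : ℂ) *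
        ((Real.sin ((((l : ℕ) : ℝ) + 1) * θ) : ℝ) : ℂ) := by
      rw [hx l]
      simp only [Complex.star_def, _root_.map_mul, Complex.conj_ofReal]
      rw [← Complex.exp_conj, _root_.map_mul, Complex.conj_I, Complex.conj_ofReal, neg_mul]
    rw [hM, vecMulVec_apply, Pi.star_apply, hy k, hsx, ent]
  -- the three diagonal sums
  have hT0 : (∑ k : Fin n, ∑ l : Fin n,
      if ((l : ℤ) - (k : ℤ)) = 0 then M k l else 0) = ((A : ℝ) : ℂ) := by
    have step1 : ∀ k : Fin n, (∑ l : Fin n,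
        if ((l : ℤ) - (k : ℤ)) = 0 then M k l else 0) = ent ρ φ θ (k : ℕ) (k : ℕ) := by
      intro k
      rw [Finset.sum_eq_single_of_mem k (Finset.mem_univ k)]
      · rw [if_pos (by omega), hMentry]
      · intro b _ hbk
        rw [if_neg]
        intro hc
        exact hbk (Fin.ext (by omega))
    rw [Finset.sum_congr rfl fun k _ => step1 k]
    have := Fin.sum_univ_eq_sum_range (fun a => ent ρ φ θ a a) n
    rw [this, Finset.sum_congr rfl fun a _ => ent_diag ρ φ θ hρ a, ← Complex.ofReal_sum,
      sinsq_sum n r hn hr1 hrn θ hθ, hA]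
  have hT1 : (∑ k : Fin n, ∑ l : Fin n,
      if ((l : ℤ) - (k : ℤ)) = 1 then M k l else 0) =
      Complex.exp (-(Complex.I * (φ : ℂ))) * ((ρ ^ ((1 : ℝ) / 2) : ℝ) : ℂ) *
        ((A * Real.cos θ : ℝ) : ℂ) := by
    have step0 : (∑ k : Fin n, ∑ l : Fin n,
        if ((l : ℤ) - (k : ℤ)) = 1 then M k l else 0) =
        ∑ a ∈ range n, ∑ b ∈ range n,
          if ((b : ℤ) - (a : ℤ)) = 1 then ent ρ φ θ a b else 0 := by
      simp only [hMentry]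
      exact double_fin_to_range n (fun a b => if ((b : ℤ) - (a : ℤ)) = 1 then ent ρ φ θ a b else 0)
    rw [step0]
    have inner : ∀ a ∈ range n, (∑ b ∈ range n,
        if ((b : ℤ) - (a : ℤ)) = 1 then ent ρ φ θ a b else 0)
        = (if a + 1 ∈ range n then ent ρ φ θ a (a + 1) else 0) := by
      intro a _
      trans (∑ b ∈ range n, if b = a + 1 then ent ρ φ θ a b else 0)
      · exact Finset.sum_congr rfl fun b _ =>
          if_congr (show (((b : ℤ) - (a : ℤ)) = 1) ↔ b = a + 1 by omega) rfl rfl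
      · exact Finset.sum_ite_eq' (range n) (a + 1) (fun b => ent ρ φ θ a b)
    rw [Finset.sum_congr rfl inner, sum_shift_ind n (fun a => ent ρ φ θ a (a + 1)),
      Finset.sum_congr rfl (fun a _ => ent_super ρ φ θ hρ a), ← Finset.mul_sum,
      ← Complex.ofReal_sum, sinprod_sum n r hn hr1 hrn θ hθ, hA]
  have hTm1 : (∑ k : Fin n, ∑ l : Fin n,
      if ((l : ℤ) - (k : ℤ)) = -1 then M k l else 0) =
      Complex.exp (Complex.I * (φ : ℂ)) * ((ρ ^ (-(1 : ℝ) / 2) : ℝ) : ℂ) *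
        ((A * Real.cos θ : ℝ) : ℂ) := by
    rw [Finset.sum_comm]
    have step0 : (∑ l : Fin n, ∑ k : Fin n,
        if ((l : ℤ) - (k : ℤ)) = -1 then M k l else 0) =
        ∑ b ∈ range n, ∑ a ∈ range n,
          if ((b : ℤ) - (a : ℤ)) = -1 then ent ρ φ θ a b else 0 := by
      simp only [hMentry]
      exact double_fin_to_range n (fun b a => if ((b : ℤ) - (a : ℤ)) = -1 then ent ρ φ θ a b else 0)
    rw [step0]
    have inner : ∀ b ∈ range n, (∑ a ∈ range n,
        if ((b : ℤ) - (a : ℤ)) = -1 then ent ρ φ θ a b else 0)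
        = (if b + 1 ∈ range n then ent ρ φ θ (b + 1) b else 0) := by
      intro b _
      trans (∑ a ∈ range n, if a = b + 1 then ent ρ φ θ a b else 0)
      · exact Finset.sum_congr rfl fun a _ =>
          if_congr (show (((b : ℤ) - (a : ℤ)) = -1) ↔ a = b + 1 by omega) rfl rfl
      · exact Finset.sum_ite_eq' (range n) (b + 1) (fun a => ent ρ φ θ a b)
    rw [Finset.sum_congr rfl inner, sum_shift_ind n (fun b => ent ρ φ θ (b + 1) b),
      Finset.sum_congr rfl (fun b _ => ent_sub ρ φ θ hρ b), ← Finset.mul_sum,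
      ← Complex.ofReal_sum, sinprod_sum n r hn hr1 hrn θ hθ, hA]
  -- norms of entries
  have hn0 : (0 : ℝ) < n := by positivity
  have hn1' : (1 : ℕ) ≤ n := by omega
  have hn1 : (0 : ℝ) < (n : ℝ) - 1 := by
    have : (2 : ℝ) ≤ n := by exact_mod_cast hn
    linarith
  have hcast : ((n - 1 : ℕ) : ℝ) = (n : ℝ) - 1 := by
    rw [Nat.cast_sub hn1']; norm_num
  have hsq1 : (ρ ^ ((1 : ℝ) / 2)) ^ 2 = ρ := by
    rw [← Real.rpow_natCast (ρ ^ ((1 : ℝ) / 2)) 2, ← Real.rpow_mul hρ.le]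
    norm_num
  have hsq2 : (ρ ^ (-(1 : ℝ) / 2)) ^ 2 = ρ⁻¹ := by
    rw [← Real.rpow_natCast (ρ ^ (-(1 : ℝ) / 2)) 2, ← Real.rpow_mul hρ.le]
    norm_num [Real.rpow_neg_one]
  set F : ℤ → ℝ := fun d => if d = 0 then (A / (n : ℝ)) ^ 2
    else if d = 1 then ρ * (A * Real.cos θ / ((n : ℝ) - 1)) ^ 2
    else if d = -1 then ρ⁻¹ * (A * Real.cos θ / ((n : ℝ) - 1)) ^ 2
    else 0 with hF
  have hF0 : F 0 = (A / (n : ℝ)) ^ 2 := by simp [hF]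
  have hF1 : F 1 = ρ * (A * Real.cos θ / ((n : ℝ) - 1)) ^ 2 := by norm_num [hF]
  have hFm : F (-1) = ρ⁻¹ * (A * Real.cos θ / ((n : ℝ) - 1)) ^ 2 := by norm_num [hF]
  have hP : ∀ i j : Fin n, ‖projS n ({-1, 0, 1} : Finset ℤ) M i j‖ ^ 2
      = F ((j : ℤ) - (i : ℤ)) := by
    intro i j
    simp only [projS]
    by_cases h0 : (j : ℤ) - (i : ℤ) = 0
    · rw [h0, if_pos (by decide), hT0, hF0]
      simp only [Int.natAbs_zero, Nat.sub_zero]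
      rw [norm_div, Complex.norm_real, Complex.norm_natCast, Real.norm_eq_abs,
        _root_.abs_of_nonneg (by positivity : (0:ℝ) ≤ A)]
    · by_cases h1 : (j : ℤ) - (i : ℤ) = 1
      · rw [h1, if_pos (by decide), hT1, hF1]
        simp only [Int.natAbs_one]
        rw [norm_div, norm_mul, norm_mul, Complex.norm_real, Complex.norm_real,
          Complex.norm_natCast, Real.norm_eq_abs, Real.norm_eq_abs,
          _root_.abs_of_nonneg (Real.rpow_nonneg hρ.le _), hcast]
        have hexp : ‖Complex.exp (-(Complex.I * (φ : ℂ)))‖ = 1 := by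
          rw [Complex.norm_exp]
          norm_num
        rw [hexp, one_mul, div_pow, mul_pow, hsq1, _root_.sq_abs, mul_div_assoc, div_pow]
      · by_cases hm1 : (j : ℤ) - (i : ℤ) = -1
        · rw [hm1, if_pos (by decide), hTm1, hFm]
          rw [show ((-1 : ℤ)).natAbs = 1 from rfl]
          rw [norm_div, norm_mul, norm_mul, Complex.norm_real, Complex.norm_real,
            Complex.norm_natCast, Real.norm_eq_abs, Real.norm_eq_abs,
            _root_.abs_of_nonneg (Real.rpow_nonneg hρ.le _), hcast]
          have hexp : ‖Complex.exp (Complex.I * (φ : ℂ))‖ = 1 := by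
            rw [Complex.norm_exp]
            norm_num
          rw [hexp, one_mul, div_pow, mul_pow, hsq2, _root_.sq_abs, mul_div_assoc, div_pow]
        · rw [if_neg (by
            simp only [Finset.mem_insert, Finset.mem_singleton]
            push_neg
            exact ⟨hm1, h0, h1⟩)]
          simp only [norm_zero, hF]
          rw [if_neg h0, if_neg h1, if_neg hm1]
          norm_num
  have hsplit : ∀ i j : Fin n, F ((j : ℤ) - (i : ℤ)) =
      (if (j : ℕ) = (i : ℕ) then F 0 else 0) +
      (if (j : ℕ) = (i : ℕ) + 1 then F 1 else 0) +
      (if (i : ℕ) = (j : ℕ) + 1 then F (-1) else 0) := by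
    intro i j
    by_cases h0 : (j : ℕ) = (i : ℕ)
    · rw [if_pos h0, if_neg (by omega), if_neg (by omega),
        show (j : ℤ) - (i : ℤ) = 0 by omega]
      ring
    · by_cases h1 : (j : ℕ) = (i : ℕ) + 1
      · rw [if_neg h0, if_pos h1, if_neg (by omega),
          show (j : ℤ) - (i : ℤ) = 1 by omega]
        ring
      · by_cases h2 : (i : ℕ) = (j : ℕ) + 1
        · rw [if_neg h0, if_neg h1, if_pos h2,
            show (j : ℤ) - (i : ℤ) = -1 by omega]
          ring
        · rw [if_neg h0, if_neg h1, if_neg h2]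
          simp only [hF]
          have e0 : ¬((j : ℤ) - (i : ℤ) = 0) := by omega
          have e1 : ¬((j : ℤ) - (i : ℤ) = 1) := by omega
          have e2 : ¬((j : ℤ) - (i : ℤ) = -1) := by omega
          rw [if_neg e0, if_neg e1, if_neg e2]
          ring
  have p1 : ∑ i : Fin n, ∑ j : Fin n, (if (j : ℕ) = (i : ℕ) then F 0 else 0)
      = (n : ℝ) * F 0 := by
    have h : ∀ i : Fin n, ∑ j : Fin n, (if (j : ℕ) = (i : ℕ) then F 0 else 0) = F 0 := by
      intro i
      rw [Finset.sum_eq_single_of_mem i (Finset.mem_univ i)]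
      · rw [if_pos rfl]
      · intro b _ hb
        exact if_neg (fun hc => hb (Fin.ext hc))
    rw [Finset.sum_congr rfl fun i _ => h i, Finset.sum_const, Finset.card_univ,
      Fintype.card_fin, nsmul_eq_mul]
  have p2 : ∑ i : Fin n, ∑ j : Fin n, (if (j : ℕ) = (i : ℕ) + 1 then F 1 else 0)
      = ((n - 1 : ℕ) : ℝ) * F 1 := by
    rw [double_fin_to_range n (fun a b => if b = a + 1 then F 1 else 0),
      Finset.sum_congr rfl fun a _ => Finset.sum_ite_eq' (range n) (a + 1) (fun _ => F 1),
      sum_shift_ind n (fun _ => F 1), Finset.sum_const, Finset.card_range, nsmul_eq_mul]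
  have p3 : ∑ i : Fin n, ∑ j : Fin n, (if (i : ℕ) = (j : ℕ) + 1 then F (-1) else 0)
      = ((n - 1 : ℕ) : ℝ) * F (-1) := by
    rw [Finset.sum_comm,
      double_fin_to_range n (fun b a => if a = b + 1 then F (-1) else 0),
      Finset.sum_congr rfl fun b _ => Finset.sum_ite_eq' (range n) (b + 1) (fun _ => F (-1)),
      sum_shift_ind n (fun _ => F (-1)), Finset.sum_const, Finset.card_range, nsmul_eq_mul]
  have hcount : ∑ i : Fin n, ∑ j : Fin n, F ((j : ℤ) - (i : ℤ))
      = (n : ℝ) * F 0 + ((n - 1 : ℕ) : ℝ) * F 1 + ((n - 1 : ℕ) : ℝ) * F (-1) := by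
    rw [Finset.sum_congr rfl fun i _ => Finset.sum_congr rfl fun j _ => hsplit i j]
    simp only [Finset.sum_add_distrib]
    rw [p1, p2, p3]
  rw [frobNorm,
    Finset.sum_congr rfl fun i _ => Finset.sum_congr rfl fun j _ => hP i j, hcount,
    hF0, hF1, hFm, hcast]
  have key : (n : ℝ) * (A / (n : ℝ)) ^ 2
      + ((n : ℝ) - 1) * (ρ * (A * Real.cos θ / ((n : ℝ) - 1)) ^ 2)
      + ((n : ℝ) - 1) * (ρ⁻¹ * (A * Real.cos θ / ((n : ℝ) - 1)) ^ 2)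
      = A ^ 2 * (1 / (n : ℝ) + 1 / ((n : ℝ) - 1) * (ρ + 1 / ρ) * Real.cos θ ^ 2) := by
    field_simp
    ring
  rw [key, Real.sqrt_mul (sq_nonneg A), Real.sqrt_sq (by positivity : (0 : ℝ) ≤ A), hA]
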